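/- Let M ∈ ℝ^{n×n} be Schur stable and W ∈ ℝ^{n×n} symmetric. Let X ∈ ℝ^{n×n} be symmetric and satisfy the Lyapunov inequality M X Mᵀ − X + W ⪯ 0 (i.e., −(MXMᵀ − X + W) is positive semidefinite), and let X₀ ∈ ℝ^{n×n} be symmetric and satisfy the Lyapunov equation M X₀ Mᵀ − X₀ + W = 0. Then X ⪰ X₀. -/

import Mathlib

/-!
With `D = X - X₀`, subtracting the Lyapunov equation from the inequality gives
`D - M D Mᵀ ⪰ 0`. Conjugating by powers of `M` and telescoping,
`D - Mᵏ D (Mᵏ)ᵀ = ∑_{i<k} Mⁱ (D - M D Mᵀ) (Mⁱ)ᵀ ⪰ 0` for every `k`.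
By Gelfand's formula a Schur stable `M` has `Mᵏ → 0`, so `D` is a limit of
positive semidefinite matrices, and these form a closed set.
-/

open Matrix

noncomputable section

/-- A real square matrix is Schur stable if every complex eigenvalue has modulus < 1. -/
def IsSchur {n : ℕ} (M : Matrix (Fin n) (Fin n) ℝ) : Prop :=
  ∀ μ ∈ spectrum ℂ (M.map Complex.ofReal), ‖μ‖ < 1

open Filter Topology

section BanachAlgebra

variable {A : Type*} [NormedRing A] [NormedAlgebra ℂ A] [CompleteSpace A]

theorem tendsto_pow_atTop_nhds_zero_of_spectralRadius_lt_one {a : A}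
    (h : spectralRadius ℂ a < 1) : Tendsto (a ^ ·) atTop (𝓝 0) := by
  obtain ⟨r, hρr, hr1⟩ := ENNReal.lt_iff_exists_nnreal_btwn.mp h
  refine squeeze_zero_norm' ?_ <|
    tendsto_pow_atTop_nhds_zero_of_lt_one r.coe_nonneg (ENNReal.coe_lt_one_iff.mp hr1)
  filter_upwards [(spectrum.pow_nnnorm_pow_one_div_tendsto_nhds_spectralRadius a).eventually_lt_const
    hρr, eventually_ne_atTop 0] with k hk hk0
  rw [one_div, ENNReal.rpow_inv_lt_iff (by positivity), ENNReal.rpow_natCast, ← ENNReal.coe_pow,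
    ENNReal.coe_lt_coe] at hk
  exact_mod_cast hk.le

theorem tendsto_pow_atTop_nhds_zero_of_forall_norm_lt_one {a : A}
    (h : ∀ μ ∈ spectrum ℂ a, ‖μ‖ < 1) : Tendsto (a ^ ·) atTop (𝓝 0) := by
  cases subsingleton_or_nontrivial A
  · simpa only [Subsingleton.elim _ (0 : A)] using tendsto_const_nhds
  refine tendsto_pow_atTop_nhds_zero_of_spectralRadius_lt_one ?_
  exact_mod_cast spectrum.spectralRadius_lt_of_forall_lt a fun μ hμ ↦ by exact_mod_cast h μ hμ

end BanachAlgebra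

namespace Matrix

variable {n R : Type*} [Ring R] [PartialOrder R] [StarRing R]

theorem isClosed_setOf_posSemidef [TopologicalSpace R] [IsTopologicalRing R] [ContinuousStar R]
    [OrderClosedTopology R] : IsClosed {A : Matrix n n R | A.PosSemidef} := by
  simp only [PosSemidef, IsHermitian, Set.ofPred_and, Set.ofPred_forall]
  refine (isClosed_eq continuous_id.matrix_conjTranspose continuous_id).inter ?_
  refine isClosed_iInter fun x ↦ isClosed_le continuous_const ?_
  simp only [Finsupp.sum]
  fun_prop

variable [Fintype n] [DecidableEq n] [AddLeftMono R]

theorem PosSemidef.sub_pow_mul_mul_conjTranspose_pow {D M : Matrix n n R}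
    (h : (D - M * D * Mᴴ).PosSemidef) (k : ℕ) : (D - M ^ k * D * (M ^ k)ᴴ).PosSemidef := by
  induction k with
  | zero => simpa using PosSemidef.zero
  | succ k ih =>
    have hsplit : D - M ^ (k + 1) * D * (M ^ (k + 1))ᴴ
        = (D - M ^ k * D * (M ^ k)ᴴ) + M ^ k * (D - M * D * Mᴴ) * (M ^ k)ᴴ := by
      simp only [pow_succ, conjTranspose_mul, Matrix.mul_sub, Matrix.sub_mul, Matrix.mul_assoc]
      abel
    rw [hsplit]
    exact ih.add (h.mul_mul_conjTranspose_same _)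

end Matrix

theorem IsSchur.tendsto_pow_atTop_nhds_zero {n : ℕ} {M : Matrix (Fin n) (Fin n) ℝ}
    (hM : IsSchur M) : Tendsto (M ^ ·) atTop (𝓝 0) := by
  let : NormedRing (Matrix (Fin n) (Fin n) ℂ) := Matrix.linftyOpNormedRing
  let : NormedAlgebra ℂ (Matrix (Fin n) (Fin n) ℂ) := Matrix.linftyOpNormedAlgebra
  have hN := tendsto_pow_atTop_nhds_zero_of_forall_norm_lt_one hM
  have hmap (k : ℕ) : (M ^ k).map Complex.ofReal = M.map Complex.ofReal ^ k :=
    map_pow Complex.ofRealHom.mapMatrix M k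
  rw [Complex.isometry_ofReal.isEmbedding.matrix_map.isInducing.tendsto_nhds_iff]
  simp only [Function.comp_def, hmap]
  exact hN

theorem stmt_15_general {n : ℕ}
    (M W X X₀ : Matrix (Fin n) (Fin n) ℝ)
    (hM : IsSchur M)
    (hXineq : (-(M * X * Mᵀ - X + W)).PosSemidef)
    (hX₀eq : M * X₀ * Mᵀ - X₀ + W = 0) :
    (X - X₀).PosSemidef := by
  have hstep : ((X - X₀) - M * (X - X₀) * Mᴴ).PosSemidef := by
    have hW : W = X₀ - M * X₀ * Mᵀ := by rw [← sub_eq_zero, ← hX₀eq]; abel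
    rw [conjTranspose_eq_transpose_of_trivial]
    convert hXineq using 1
    rw [hW, Matrix.mul_sub, Matrix.sub_mul]
    abel
  have hlim : Tendsto (fun k ↦ (X - X₀) - M ^ k * (X - X₀) * (M ^ k)ᴴ) atTop (𝓝 (X - X₀)) := by
    have hMk := hM.tendsto_pow_atTop_nhds_zero
    simpa only [zero_mul, star_zero, mul_zero, sub_zero, star_eq_conjTranspose] using
      tendsto_const_nhds.sub ((hMk.mul_const (X - X₀)).mul hMk.star)
  exact isClosed_setOf_posSemidef.mem_of_tendsto hlim
    (Eventually.of_forall hstep.sub_pow_mul_mul_conjTranspose_pow)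

/-- Comparison lemma for the discrete-time Lyapunov inequality. -/
theorem stmt_15 {n : ℕ}
    (M W X X₀ : Matrix (Fin n) (Fin n) ℝ)
    (hM : IsSchur M) (hW : W.IsHermitian)
    (hX : X.IsHermitian)
    (hXineq : (-(M * X * Mᵀ - X + W)).PosSemidef)
    (hX₀ : X₀.IsHermitian)
    (hX₀eq : M * X₀ * Mᵀ - X₀ + W = 0) :
    (X - X₀).PosSemidef :=
  stmt_15_general M W X X₀ hM hXineq hX₀eq
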